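/- Let W, Y₁, …, Yₙ be rays in V, C := conv(Y₁, …, Yₙ), and μ_W(C) the minimal value of CS(W, −) on C. Assume μ_W(C) < min_{1≤i≤n} CS(W, Yᵢ). Let Y ∈ C be a ray with CS(W, Y) = μ_W(C), choose yᵢ ∈ e·Yᵢ and λ₁, …, λₙ ∈ eR, not all zero, such that Y = ray(y) for y := Σᵢ λᵢ·yᵢ, and set γ_ii := q(yᵢ) and γ_ij := b(yᵢ, yⱼ) for i < j, so that q(y) = Σ_{1≤i≤j≤n} γ_ij·λᵢ·λⱼ. Suppose the term γ_rs·λ_r·λ_s (1 ≤ r ≤ s ≤ n) is dominant, i.e. q(y) = γ_rs·λ_r·λ_s. Then r < s; the ray Z_rs := ray(λ_r·y_r + λ_s·y_s) ∈ [Y_r, Y_s] is the W-median M_W(Y_r, Y_s); μ_W(C) = CS(W, Z_rs) and CS(W, Z_rs)²·CS(Y_r, Y_s) = CS(W, Y_r)·CS(W, Y_s); and Z_rs is the unique ray Z ∈ [Y_r, Y_s] with CS(W, Z) = μ_W(C). -/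

import Mathlib

namespace SupertropicalCS

/-- The ray of a vector `x` in an `R`-module `V`: the set of all nonzero vectors `y`
with `lam • x = mu • y` for some nonzero scalars `lam`, `mu`. -/
def ray (R : Type*) {V : Type*} [CommSemiring R] [AddCommMonoid V] [Module R V]
    (x : V) : Set V :=
  {y | y ≠ 0 ∧ ∃ lam mu : R, lam ≠ 0 ∧ mu ≠ 0 ∧ lam • x = mu • y}

/-- The set of all rays in `V` (the ray space `Ray(V)`). -/
def Rays (R V : Type*) [CommSemiring R] [AddCommMonoid V] [Module R V] : Set (Set V) :=
  {S | ∃ x : V, x ≠ 0 ∧ S = ray R x}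

/-- The closed interval `[ray x, ray y]` in the ray space: all rays
`ray (lam • x + mu • y)` with `lam, mu ∈ R` and `lam • x + mu • y ≠ 0`. -/
def rayInterval (R : Type*) {V : Type*} [CommSemiring R] [AddCommMonoid V] [Module R V]
    (x y : V) : Set (Set V) :=
  {S | ∃ lam mu : R, lam • x + mu • y ≠ 0 ∧ S = ray R (lam • x + mu • y)}

/-- The open interval `]ray x, ray y[` in the ray space: all rays
`ray (lam • x + mu • y)` with `lam, mu ∈ R ∖ {0}`. -/
def rayOpenInterval (R : Type*) {V : Type*} [CommSemiring R] [AddCommMonoid V] [Module R V]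
    (x y : V) : Set (Set V) :=
  {S | ∃ lam mu : R, lam ≠ 0 ∧ mu ≠ 0 ∧ lam • x + mu • y ≠ 0 ∧
    S = ray R (lam • x + mu • y)}

/-- The half-open interval `[ray x, ray y[` in the ray space: all rays
`ray (lam • x + mu • y)` with `lam ∈ R ∖ {0}` and `mu ∈ R`. -/
def rayHalfOpenInterval (R : Type*) {V : Type*} [CommSemiring R] [AddCommMonoid V] [Module R V]
    (x y : V) : Set (Set V) :=
  {S | ∃ lam mu : R, lam ≠ 0 ∧ lam • x + mu • y ≠ 0 ∧ S = ray R (lam • x + mu • y)}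

/-- A set of rays is convex if together with any two of its members it contains the
closed interval between them. -/
def RayConvex (R : Type*) {V : Type*} [CommSemiring R] [AddCommMonoid V] [Module R V]
    (A : Set (Set V)) : Prop :=
  ∀ x y : V, x ≠ 0 → y ≠ 0 → ray R x ∈ A → ray R y ∈ A → rayInterval R x y ⊆ A

/-- The convex hull of a set of rays: the smallest convex set of rays containing it. -/
def rayConvHull (R : Type*) {V : Type*} [CommSemiring R] [AddCommMonoid V] [Module R V]
    (S : Set (Set V)) : Set (Set V) :=
  ⋂₀ {A : Set (Set V) | S ⊆ A ∧ RayConvex R A}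

/-- The ordering `a ≤ b ⟺ a + b = b` (a total order on the ghost ideal `eR`). -/
def rle {R : Type*} [Add R] (a b : R) : Prop := a + b = b

/-- The strict ordering associated to `rle`. -/
def rlt {R : Type*} [Add R] (a b : R) : Prop := rle a b ∧ a ≠ b

/-- The trilinear map `m(w,x,y) = b(w,y) • x + b(w,x) • y` defining medians. -/
def med {R V : Type*} [CommSemiring R] [AddCommMonoid V] [Module R V]
    (b : V → V → R) (w x y : V) : V :=
  b w y • x + b w x • y

/-- The polar `C^⊥` of a set `C` of rays: all rays `W` such that `b(w,x) = 0`
for every `w ∈ W` and every nonzero `x` with `ray x ∈ C`. -/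
def polar (R : Type*) {V : Type*} [CommSemiring R] [AddCommMonoid V] [Module R V]
    (b : V → V → R) (C : Set (Set V)) : Set (Set V) :=
  {W | W ∈ Rays R V ∧ ∀ w ∈ W, ∀ x : V, x ≠ 0 → ray R x ∈ C → b w x = 0}

/-- The CS-ratio `CS(x,y) = e · b(x,y)² · (q(x)·q(y))⁻¹`, the inverse being taken in the
semifield `eR` (so `inv` is a function with `e * a * inv a = e` for `a ≠ 0`). -/
def CS {R V : Type*} [CommSemiring R] (e : R) (inv : R → R)
    (q : V → R) (b : V → V → R) (x y : V) : R :=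
  e * (b x y * b x y) * inv (q x * q y)

section Helpers

variable {R : Type*} [CommSemiring R]

theorem st_rle_trans {a b c : R} (h1 : rle a b) (h2 : rle b c) : rle a c := by
  unfold rle at *; rw [← h2, ← add_assoc, h1]

theorem st_rle_antisymm {a b : R} (h1 : rle a b) (h2 : rle b a) : a = b := by
  unfold rle at *
  calc a = b + a := h2.symm
    _ = a + b := add_comm _ _
    _ = b := h1

theorem st_rle_mul {a b : R} (c : R) (h : rle a b) : rle (a * c) (b * c) := by
  unfold rle at *; rw [← add_mul, h]

theorem st_rle_mul_left {a b : R} (c : R) (h : rle a b) : rle (c * a) (c * b) := by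
  unfold rle at *; rw [← mul_add, h]

theorem st_rle_add {a b c d : R} (h1 : rle a c) (h2 : rle b d) : rle (a + b) (c + d) := by
  unfold rle at *
  calc a + b + (c + d) = (a + c) + (b + d) := by ring
    _ = c + d := by rw [h1, h2]

theorem st_rle_both {a b c : R} (h1 : rle a c) (h2 : rle b c) : rle (a + b) c := by
  unfold rle at *
  calc a + b + c = a + (b + c) := by ring
    _ = a + c := by rw [h2]
    _ = c := h1

theorem st_rle_zero {a : R} (h : rle a 0) : a = 0 := by
  unfold rle at h; rwa [add_zero] at h

theorem st_dom3 {t1 t2 t3 : R} (h1 : rle t1 t3) (h2 : rle t2 t3) : t1 + t2 + t3 = t3 := by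
  unfold rle at *; rw [add_assoc, h2, h1]

theorem st_rle_rlt_trans {a b c : R} (h1 : rle a b) (h2 : rlt b c) : rlt a c :=
  ⟨st_rle_trans h1 h2.1, fun hac => h2.2 (st_rle_antisymm h2.1 (hac ▸ h1))⟩

theorem st_rlt_rle_trans {a b c : R} (h1 : rlt a b) (h2 : rle b c) : rlt a c :=
  ⟨st_rle_trans h1.1 h2, fun hac => h1.2 (st_rle_antisymm h1.1 (hac ▸ h2))⟩

variable {e : R} {inv : R → R}

theorem st_ghostE (he2 : e * e = e) (t : R) : e * (e * t) = e * t := by rw [← mul_assoc, he2]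

theorem st_gfac (he2 : e * e = e) (t u : R) : e * (e * t * u) = e * t * u := by
  rw [mul_assoc e t u, st_ghostE he2]

theorem st_mulne (hzd : ∀ a b : R, a * b = 0 → a = 0 ∨ b = 0)
    {a b : R} (ha : a ≠ 0) (hb : b ≠ 0) : a * b ≠ 0 :=
  fun h => (hzd a b h).elim ha hb

theorem st_gadd
    (hst : ∀ a b : R, (e * a ≠ e * b → a + b = a ∨ a + b = b) ∧ (e * a = e * b → a + b = e * a))
    {a : R} (ha : e * a = a) : a + a = a := by
  have := (hst a a).2 rfl; rw [this, ha]

theorem st_grefl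
    (hst : ∀ a b : R, (e * a ≠ e * b → a + b = a ∨ a + b = b) ∧ (e * a = e * b → a + b = e * a))
    {a : R} (ha : e * a = a) : rle a a := st_gadd hst ha

theorem st_rle_left
    (hst : ∀ a b : R, (e * a ≠ e * b → a + b = a ∨ a + b = b) ∧ (e * a = e * b → a + b = e * a))
    {a : R} (c : R) (ha : e * a = a) : rle a (a + c) := by
  unfold rle; rw [← add_assoc, st_gadd hst ha]

theorem st_rle_right
    (hst : ∀ a b : R, (e * a ≠ e * b → a + b = a ∨ a + b = b) ∧ (e * a = e * b → a + b = e * a))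
    {c : R} (a : R) (hc : e * c = c) : rle c (a + c) := by
  unfold rle
  calc c + (a + c) = a + (c + c) := by ring
    _ = a + c := by rw [st_gadd hst hc]

theorem st_gbip (hbip : ∀ a b : R, e * a + e * b = e * a ∨ e * a + e * b = e * b)
    {a b : R} (ha : e * a = a) (hb : e * b = b) : a + b = a ∨ a + b = b := by
  have := hbip a b; rwa [ha, hb] at this

theorem st_gtotal (hbip : ∀ a b : R, e * a + e * b = e * a ∨ e * a + e * b = e * b)
    {a b : R} (ha : e * a = a) (hb : e * b = b) : rle a b ∨ rle b a := by
  rcases st_gbip hbip ha hb with h | h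
  · right; unfold rle; rwa [add_comm]
  · left; exact h

theorem st_gcancel (hinv : ∀ a : R, a ≠ 0 → e * inv a = inv a ∧ e * a * inv a = e)
    {a b d : R} (ha : e * a = a) (hb : e * b = b) (hd : d ≠ 0)
    (h : a * d = b * d) : a = b := by
  have h1 := (hinv d hd).2
  calc a = e * a := ha.symm
    _ = (e * d * inv d) * a := by rw [h1]
    _ = (a * d) * inv d * e := by ring
    _ = (b * d) * inv d * e := by rw [h]
    _ = (e * d * inv d) * b := by ring
    _ = e * b := by rw [h1]
    _ = b := hb

theorem st_rle_cancel
    (hst : ∀ a b : R, (e * a ≠ e * b → a + b = a ∨ a + b = b) ∧ (e * a = e * b → a + b = e * a))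
    (hbip : ∀ a b : R, e * a + e * b = e * a ∨ e * a + e * b = e * b)
    (hinv : ∀ a : R, a ≠ 0 → e * inv a = inv a ∧ e * a * inv a = e)
    {a b d : R} (ha : e * a = a) (hb : e * b = b) (hd : d ≠ 0)
    (h : rle (a * d) (b * d)) : rle a b := by
  rcases st_gtotal hbip ha hb with h1 | h1
  · exact h1
  · have h2 := st_rle_antisymm h (st_rle_mul d h1)
    have hab := st_gcancel hinv ha hb hd h2
    rw [hab]; exact st_grefl hst hb

theorem st_rlt_mul (hinv : ∀ a : R, a ≠ 0 → e * inv a = inv a ∧ e * a * inv a = e)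
    {a b d : R} (ha : e * a = a) (hb : e * b = b) (hd : d ≠ 0)
    (h : rlt a b) : rlt (a * d) (b * d) :=
  ⟨st_rle_mul d h.1, fun hh => h.2 (st_gcancel hinv ha hb hd hh)⟩

theorem st_rlt_cancel
    (hst : ∀ a b : R, (e * a ≠ e * b → a + b = a ∨ a + b = b) ∧ (e * a = e * b → a + b = e * a))
    (hbip : ∀ a b : R, e * a + e * b = e * a ∨ e * a + e * b = e * b)
    (hinv : ∀ a : R, a ≠ 0 → e * inv a = inv a ∧ e * a * inv a = e)
    {a b d : R} (ha : e * a = a) (hb : e * b = b) (hd : d ≠ 0)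
    (h : rlt (a * d) (b * d)) : rlt a b :=
  ⟨st_rle_cancel hst hbip hinv ha hb hd h.1, fun hh => h.2 (by rw [hh])⟩

theorem st_csclear (hinv : ∀ a : R, a ≠ 0 → e * inv a = inv a ∧ e * a * inv a = e)
    (N Q : R) (hQ : Q ≠ 0) : (e * N * inv Q) * Q = e * N := by
  have h := (hinv Q hQ).2
  calc (e * N * inv Q) * Q = N * (e * Q * inv Q) := by ring
    _ = N * e := by rw [h]
    _ = e * N := mul_comm _ _

theorem st_cs_ghost (he2 : e * e = e) (N Q : R) :
    e * (e * N * inv Q) = e * N * inv Q := st_gfac he2 N (inv Q)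

theorem st_cseq (he2 : e * e = e)
    (hzd : ∀ a b : R, a * b = 0 → a = 0 ∨ b = 0)
    (hinv : ∀ a : R, a ≠ 0 → e * inv a = inv a ∧ e * a * inv a = e)
    {N₁ N₂ Q₁ Q₂ : R} (hQ₁ : Q₁ ≠ 0) (hQ₂ : Q₂ ≠ 0)
    (h : e * N₁ * Q₂ = e * N₂ * Q₁) : e * N₁ * inv Q₁ = e * N₂ * inv Q₂ := by
  apply st_gcancel hinv (st_cs_ghost he2 N₁ Q₁) (st_cs_ghost he2 N₂ Q₂)
    (st_mulne hzd hQ₁ hQ₂)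
  calc (e * N₁ * inv Q₁) * (Q₁ * Q₂) = ((e * N₁ * inv Q₁) * Q₁) * Q₂ := by ring
    _ = e * N₁ * Q₂ := by rw [st_csclear hinv N₁ Q₁ hQ₁]
    _ = e * N₂ * Q₁ := h
    _ = ((e * N₂ * inv Q₂) * Q₂) * Q₁ := by rw [st_csclear hinv N₂ Q₂ hQ₂]
    _ = (e * N₂ * inv Q₂) * (Q₁ * Q₂) := by ring

theorem st_csle (he2 : e * e = e)
    (hst : ∀ a b : R, (e * a ≠ e * b → a + b = a ∨ a + b = b) ∧ (e * a = e * b → a + b = e * a))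
    (hzd : ∀ a b : R, a * b = 0 → a = 0 ∨ b = 0)
    (hbip : ∀ a b : R, e * a + e * b = e * a ∨ e * a + e * b = e * b)
    (hinv : ∀ a : R, a ≠ 0 → e * inv a = inv a ∧ e * a * inv a = e)
    {N₁ N₂ Q₁ Q₂ : R} (hQ₁ : Q₁ ≠ 0) (hQ₂ : Q₂ ≠ 0)
    (h : rle (e * N₁ * Q₂) (e * N₂ * Q₁)) :
    rle (e * N₁ * inv Q₁) (e * N₂ * inv Q₂) := by
  apply st_rle_cancel hst hbip hinv (st_cs_ghost he2 N₁ Q₁) (st_cs_ghost he2 N₂ Q₂)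
    (st_mulne hzd hQ₁ hQ₂)
  have e1 : (e * N₁ * inv Q₁) * (Q₁ * Q₂) = e * N₁ * Q₂ := by
    calc (e * N₁ * inv Q₁) * (Q₁ * Q₂) = ((e * N₁ * inv Q₁) * Q₁) * Q₂ := by ring
      _ = e * N₁ * Q₂ := by rw [st_csclear hinv N₁ Q₁ hQ₁]
  have e2 : (e * N₂ * inv Q₂) * (Q₁ * Q₂) = e * N₂ * Q₁ := by
    calc (e * N₂ * inv Q₂) * (Q₁ * Q₂) = ((e * N₂ * inv Q₂) * Q₂) * Q₁ := by ring
      _ = e * N₂ * Q₁ := by rw [st_csclear hinv N₂ Q₂ hQ₂]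
  rw [e1, e2]; exact h

theorem st_cslt_poly
    (hinv : ∀ a : R, a ≠ 0 → e * inv a = inv a ∧ e * a * inv a = e)
    (he2 : e * e = e)
    (hzd : ∀ a b : R, a * b = 0 → a = 0 ∨ b = 0)
    {N₁ N₂ Q₁ Q₂ : R} (hQ₁ : Q₁ ≠ 0) (hQ₂ : Q₂ ≠ 0)
    (h : rlt (e * N₁ * inv Q₁) (e * N₂ * inv Q₂)) :
    rlt (e * N₁ * Q₂) (e * N₂ * Q₁) := by
  have e1 : (e * N₁ * inv Q₁) * (Q₁ * Q₂) = e * N₁ * Q₂ := by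
    calc (e * N₁ * inv Q₁) * (Q₁ * Q₂) = ((e * N₁ * inv Q₁) * Q₁) * Q₂ := by ring
      _ = e * N₁ * Q₂ := by rw [st_csclear hinv N₁ Q₁ hQ₁]
  have e2 : (e * N₂ * inv Q₂) * (Q₁ * Q₂) = e * N₂ * Q₁ := by
    calc (e * N₂ * inv Q₂) * (Q₁ * Q₂) = ((e * N₂ * inv Q₂) * Q₂) * Q₁ := by ring
      _ = e * N₂ * Q₁ := by rw [st_csclear hinv N₂ Q₂ hQ₂]
  constructor
  · have := st_rle_mul (Q₁ * Q₂) h.1; rwa [e1, e2] at this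
  · intro hh; exact h.2 (st_cseq he2 hzd hinv hQ₁ hQ₂ hh)

theorem st_cslt_inv (he2 : e * e = e)
    (hst : ∀ a b : R, (e * a ≠ e * b → a + b = a ∨ a + b = b) ∧ (e * a = e * b → a + b = e * a))
    (hzd : ∀ a b : R, a * b = 0 → a = 0 ∨ b = 0)
    (hbip : ∀ a b : R, e * a + e * b = e * a ∨ e * a + e * b = e * b)
    (hinv : ∀ a : R, a ≠ 0 → e * inv a = inv a ∧ e * a * inv a = e)
    {N₁ N₂ Q₁ Q₂ : R} (hQ₁ : Q₁ ≠ 0) (hQ₂ : Q₂ ≠ 0)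
    (h : rlt (e * N₁ * Q₂) (e * N₂ * Q₁)) :
    rlt (e * N₁ * inv Q₁) (e * N₂ * inv Q₂) := by
  constructor
  · exact st_csle he2 hst hzd hbip hinv hQ₁ hQ₂ h.1
  · intro hh
    have e1 : (e * N₁ * inv Q₁) * (Q₁ * Q₂) = e * N₁ * Q₂ := by
      calc (e * N₁ * inv Q₁) * (Q₁ * Q₂) = ((e * N₁ * inv Q₁) * Q₁) * Q₂ := by ring
        _ = e * N₁ * Q₂ := by rw [st_csclear hinv N₁ Q₁ hQ₁]
    have e2 : (e * N₂ * inv Q₂) * (Q₁ * Q₂) = e * N₂ * Q₁ := by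
      calc (e * N₂ * inv Q₂) * (Q₁ * Q₂) = ((e * N₂ * inv Q₂) * Q₂) * Q₁ := by ring
        _ = e * N₂ * Q₁ := by rw [st_csclear hinv N₂ Q₂ hQ₂]
    apply h.2
    rw [← e1, ← e2, hh]

theorem st_rayeq {V : Type*} [AddCommMonoid V] [Module R V]
    (hzd : ∀ a b : R, a * b = 0 → a = 0 ∨ b = 0)
    (u v : V) (l m : R) (hl : l ≠ 0) (hm : m ≠ 0) (h : l • u = m • v) :
    ray R u = ray R v := by
  have sub : ∀ (u v : V) (l m : R), l ≠ 0 → m ≠ 0 → l • u = m • v →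
      ray R u ⊆ ray R v := by
    intro u v l m hl hm h z hz
    obtain ⟨hz0, a, c, ha, hc, hac⟩ := hz
    refine ⟨hz0, a * m, l * c, st_mulne hzd ha hm, st_mulne hzd hl hc, ?_⟩
    calc (a * m) • v = a • (m • v) := mul_smul a m v
      _ = a • (l • u) := by rw [h]
      _ = l • (a • u) := smul_comm a l u
      _ = l • (c • z) := by rw [hac]
      _ = (l * c) • z := (mul_smul l c z).symm
  exact Set.Subset.antisymm (sub u v l m hl hm h) (sub v u m l hm hl h.symm)

end Helpers
/-- if the minimum of `CS(W,−)` on `C = conv(Y₁,…,Yₙ)` is below all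
`CS(W,Yᵢ)` and is attained at `Y = ray(∑ λᵢyᵢ)`, then any dominant term `γ_rs·λ_r·λ_s` of
`q(y)` has `r < s`, and `Z_rs = ray(λ_r y_r + λ_s y_s)` is the `W`-median of `[Y_r,Y_s]`,
the unique ray of `[Y_r,Y_s]` where the minimum is attained, with
`CS(W,Z_rs)²·CS(Y_r,Y_s) = CS(W,Y_r)·CS(W,Y_s)`. -/
theorem statement11 {R V : Type*} [CommSemiring R] [AddCommMonoid V] [Module R V]
    (e : R) (he : e = 1 + 1)
    (hst : ∀ a b : R, (e * a ≠ e * b → a + b = a ∨ a + b = b) ∧ (e * a = e * b → a + b = e * a))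
    (hzd : ∀ a b : R, a * b = 0 → a = 0 ∨ b = 0)
    (hbip : ∀ a b : R, e * a + e * b = e * a ∨ e * a + e * b = e * b)
    (inv : R → R)
    (hinv : ∀ a : R, a ≠ 0 → e * inv a = inv a ∧ e * a * inv a = e)
    (hmod : ∀ (c : R) (x : V), c • x = 0 → c = 0 ∨ x = 0)
    (q : V → R) (bf : V → V → R)
    (hq : ∀ (a : R) (x : V), q (a • x) = a ^ 2 * q x)
    (hba : ∀ x y z : V, bf (x + y) z = bf x z + bf y z)
    (hbs : ∀ (a : R) (x y : V), bf (a • x) y = a * bf x y)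
    (hbsymm : ∀ x y : V, bf x y = bf y x)
    (hcomp : ∀ x y : V, q (x + y) = q x + q y + bf x y)
    (han : ∀ x : V, q x = 0 → x = 0)
    (n : ℕ) (w : V) (hw : w ≠ 0)
    (y : Fin n → V) (hy : ∀ i, y i ≠ 0) (hyg : ∀ i, e • y i = y i)
    (lam : Fin n → R) (hlamg : ∀ i, e * lam i = lam i) (hlamne : ∃ i, lam i ≠ 0)
    (hYC : ray R (∑ i, lam i • y i) ∈ rayConvHull R {S | ∃ i, S = ray R (y i)})
    (hmin : ∀ z : V, z ≠ 0 → ray R z ∈ rayConvHull R {S | ∃ i, S = ray R (y i)} →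
        rle (CS e inv q bf w (∑ i, lam i • y i)) (CS e inv q bf w z))
    (hlt : ∀ i, rlt (CS e inv q bf w (∑ j, lam j • y j)) (CS e inv q bf w (y i)))
    (r s : Fin n) (hrs : r ≤ s)
    (hdom : q (∑ i, lam i • y i)
        = (if r = s then q (y r) else bf (y r) (y s)) * lam r * lam s) :
    r < s ∧
    ray R (lam r • y r + lam s • y s) ∈ rayInterval R (y r) (y s) ∧
    ray R (lam r • y r + lam s • y s) = ray R (med bf w (y r) (y s)) ∧
    CS e inv q bf w (lam r • y r + lam s • y s) = CS e inv q bf w (∑ i, lam i • y i) ∧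
    CS e inv q bf w (lam r • y r + lam s • y s) * CS e inv q bf w (lam r • y r + lam s • y s)
        * CS e inv q bf (y r) (y s)
      = CS e inv q bf w (y r) * CS e inv q bf w (y s) ∧
    (∀ a c : R, a • y r + c • y s ≠ 0 →
        CS e inv q bf w (a • y r + c • y s) = CS e inv q bf w (∑ i, lam i • y i) →
        ray R (a • y r + c • y s) = ray R (lam r • y r + lam s • y s)) := by
  classical
  set yy : V := ∑ i, lam i • y i with hyydef
  -- basic scalar facts
  have hee : e * e = e := by
    have h2 : e + e = e := by
      rcases hbip 1 1 with h | h <;> simpa using h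
    calc e * e = e + e := by rw [he]; ring
      _ = e := h2
  have he0 : e ≠ 0 := by
    obtain ⟨i₀, _⟩ := hlamne
    intro h0
    exact (hlt i₀).2 (by simp [CS, h0])
  have mulne : ∀ {a b : R}, a ≠ 0 → b ≠ 0 → a * b ≠ 0 := fun ha hb => st_mulne hzd ha hb
  have gmul : ∀ t u : R, e * u = u → e * (t * u) = t * u := fun t u h => by
    calc e * (t * u) = t * (e * u) := by ring
      _ = t * u := by rw [h]
  have gaddg : ∀ u v : R, e * u = u → e * v = v → e * (u + v) = u + v := fun u v hu hv => by
    rw [mul_add, hu, hv]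
  -- ghost values
  have gB : ∀ i, e * bf w (y i) = bf w (y i) := by
    intro i
    rw [hbsymm w (y i)]
    calc e * bf (y i) w = bf (e • y i) w := (hbs e (y i) w).symm
      _ = bf (y i) w := by rw [hyg i]
  have gbfy : ∀ i j, e * bf (y i) (y j) = bf (y i) (y j) := by
    intro i j
    calc e * bf (y i) (y j) = bf (e • y i) (y j) := (hbs e (y i) (y j)).symm
      _ = bf (y i) (y j) := by rw [hyg i]
  have gqv : ∀ v : V, e • v = v → e * q v = q v := by
    intro v hv
    have h := hq e v
    rw [hv] at h
    have h' : q v = e * (e * q v) := by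
      calc q v = e ^ 2 * q v := h
        _ = e * (e * q v) := by ring
    calc e * q v = e * (e * (e * q v)) := by rw [← h']
      _ = e * (e * q v) := st_ghostE hee _
      _ = q v := h'.symm
  have gq : ∀ i, e * q (y i) = q (y i) := fun i => gqv (y i) (hyg i)
  have gv : ∀ (i j : Fin n) (a c : R), e • (a • y i + c • y j) = a • y i + c • y j := by
    intro i j a c
    rw [smul_add, smul_smul, smul_smul, mul_comm e a, mul_comm e c, mul_smul, mul_smul,
      hyg i, hyg j]
  -- bilinear basics
  have hb0 : ∀ v : V, bf 0 v = 0 := by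
    intro v
    have h := hbs 0 (0 : V) v
    rw [zero_smul, zero_mul] at h
    exact h
  have hbw0 : ∀ v : V, bf v 0 = 0 := fun v => by rw [hbsymm]; exact hb0 v
  have hba2 : ∀ x u v : V, bf x (u + v) = bf x u + bf x v := fun x u v => by
    rw [hbsymm, hba, hbsymm u x, hbsymm v x]
  have hq0 : q (0 : V) = 0 := by
    have h := hq 0 (0 : V)
    rw [zero_smul] at h
    simpa using h
  have qne : ∀ i, q (y i) ≠ 0 := fun i h => hy i (han _ h)
  have aone : q w ≠ 0 := fun h => hw (han w h)
  have Bne : ∀ i, bf w (y i) ≠ 0 := by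
    intro i hB
    have h := hlt i
    have h0 : CS e inv q bf w (y i) = 0 := by simp [CS, hB]
    rw [h0] at h
    exact h.2 (st_rle_zero h.1)
  -- expansions
  have hbf2 : ∀ (i j : Fin n) (a c : R),
      bf w (a • y i + c • y j) = a * bf w (y i) + c * bf w (y j) := by
    intro i j a c
    rw [hbsymm, hba, hbs, hbs, hbsymm (y i) w, hbsymm (y j) w]
  have hq2 : ∀ (i j : Fin n) (a c : R),
      q (a • y i + c • y j)
        = a ^ 2 * q (y i) + c ^ 2 * q (y j) + a * (c * bf (y i) (y j)) := by
    intro i j a c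
    rw [hcomp, hq, hq, hbs, hbsymm (y i) (c • y j), hbs, hbsymm (y j) (y i)]
  have hbsumgen : ∀ t : Finset (Fin n),
      bf w (∑ i ∈ t, lam i • y i) = ∑ i ∈ t, lam i * bf w (y i) := by
    intro t
    induction t using Finset.induction_on with
    | empty => simpa using hbw0 w
    | insert _ _ ha ih =>
      rw [Finset.sum_insert ha, Finset.sum_insert ha, hba2, ih]
      congr 1
      rw [hbsymm, hbs, hbsymm]
  have hbfsum : bf w yy = ∑ i, lam i * bf w (y i) := by
    rw [hyydef]; exact hbsumgen _
  have hsplit : ∀ i : Fin n, yy = lam i • y i + ∑ j ∈ Finset.univ.erase i, lam j • y j :=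
    fun i => (Finset.add_sum_erase _ _ (Finset.mem_univ i)).symm
  -- key inequalities
  have hterm : ∀ i, rle (lam i ^ 2 * q (y i)) (q yy) := by
    intro i
    rw [hsplit i, hcomp, hq, add_assoc]
    exact st_rle_left hst _ (gmul _ _ (gq i))
  have hbterm : ∀ i, rle (lam i * bf w (y i)) (bf w yy) := by
    intro i
    rw [hbfsum, ← Finset.add_sum_erase Finset.univ (fun j => lam j * bf w (y j))
      (Finset.mem_univ i)]
    exact st_rle_left hst _ (gmul _ _ (gB i))
  have qyne : q yy ≠ 0 := by
    intro h0
    obtain ⟨i, hi⟩ := hlamne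
    have h1 := hterm i
    rw [h0] at h1
    have h2 := st_rle_zero h1
    rcases hzd _ _ h2 with h3 | h3
    · rw [pow_two] at h3
      rcases hzd _ _ h3 with h4 | h4 <;> exact hi h4
    · exact qne i h3
  have yyne : yy ≠ 0 := fun h => qyne (by rw [h, hq0])
  have hlt' : ∀ i, rlt (e * (bf w yy * bf w yy) * inv (q w * q yy))
      (e * (bf w (y i) * bf w (y i)) * inv (q w * q (y i))) := fun i => hlt i
  -- r ≠ s
  have hrsne : r ≠ s := by
    intro hrs'
    rw [if_pos hrs'] at hdom
    rw [← hrs'] at hdom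
    have hpoly := st_cslt_poly hinv hee hzd (mulne aone qyne) (mulne aone (qne r)) (hlt' r)
    have hb2 : rle ((lam r * bf w (y r)) * (lam r * bf w (y r))) (bf w yy * bf w yy) :=
      st_rle_trans (st_rle_mul _ (hbterm r)) (st_rle_mul_left _ (hbterm r))
    have h3 : rle (e * (bf w (y r) * bf w (y r)) * (q w * q yy))
        (e * (bf w yy * bf w yy) * (q w * q (y r))) := by
      rw [hdom]
      have h4 := st_rle_mul (e * (q w * q (y r))) hb2
      have e1 : ((lam r * bf w (y r)) * (lam r * bf w (y r))) * (e * (q w * q (y r)))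
          = e * (bf w (y r) * bf w (y r)) * (q w * (q (y r) * lam r * lam r)) := by ring
      have e2 : (bf w yy * bf w yy) * (e * (q w * q (y r)))
          = e * (bf w yy * bf w yy) * (q w * q (y r)) := by ring
      rwa [e1, e2] at h4
    exact (st_rlt_rle_trans hpoly h3).2 rfl
  have hrlt : r < s := lt_of_le_of_ne hrs hrsne
  have hdomg : q yy = bf (y r) (y s) * lam r * lam s := by rwa [if_neg hrsne] at hdom
  have hprodne : bf (y r) (y s) * lam r * lam s ≠ 0 := hdomg ▸ qyne
  have hgne : bf (y r) (y s) ≠ 0 := fun h => hprodne (by rw [h, zero_mul, zero_mul])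
  have hlamr : lam r ≠ 0 := fun h => hprodne (by rw [h, mul_zero, zero_mul])
  have hlams : lam s ≠ 0 := fun h => hprodne (by rw [h, mul_zero])
  -- q of z
  have qz : q (lam r • y r + lam s • y s) = bf (y r) (y s) * lam r * lam s := by
    rw [hq2 r s (lam r) (lam s)]
    have e3 : bf (y r) (y s) * lam r * lam s = lam r * (lam s * bf (y r) (y s)) := by ring
    have h1 := hterm r
    have h2 := hterm s
    rw [hdomg, e3] at h1 h2
    rw [st_dom3 h1 h2]
    exact e3.symm
  have zne : lam r • y r + lam s • y s ≠ 0 := fun h => hprodne (by rw [← qz, h, hq0])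
  -- hull membership of pair combinations
  have hullMem : ∀ (i j : Fin n) (a c : R), a • y i + c • y j ≠ 0 →
      ray R (a • y i + c • y j) ∈ rayConvHull R {S | ∃ i, S = ray R (y i)} := by
    intro i j a c hne
    apply Set.mem_sInter.mpr
    intro A hA
    exact hA.2 (y i) (y j) (hy i) (hy j) (hA.1 ⟨i, rfl⟩) (hA.1 ⟨j, rfl⟩) ⟨a, c, hne, rfl⟩
  -- CS(w,z) = mu
  have hCSz : CS e inv q bf w (lam r • y r + lam s • y s) = CS e inv q bf w yy := by
    apply st_rle_antisymm
    · show rle (e * (bf w (lam r • y r + lam s • y s) * bf w (lam r • y r + lam s • y s))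
          * inv (q w * q (lam r • y r + lam s • y s)))
        (e * (bf w yy * bf w yy) * inv (q w * q yy))
      rw [show q (lam r • y r + lam s • y s) = q yy from qz.trans hdomg.symm]
      apply st_csle hee hst hzd hbip hinv (mulne aone qyne) (mulne aone qyne)
      apply st_rle_mul
      apply st_rle_mul_left
      have hbz : rle (bf w (lam r • y r + lam s • y s)) (bf w yy) := by
        rw [hbf2 r s (lam r) (lam s)]
        exact st_rle_both (hbterm r) (hbterm s)
      exact st_rle_trans (st_rle_mul _ hbz) (st_rle_mul_left _ hbz)
    · exact hmin _ zne (hullMem r s (lam r) (lam s) zne)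
  -- the balancing core: a strict imbalance contradicts minimality
  have core : ∀ (i j : Fin n) (a c : R), a ≠ 0 → c ≠ 0 → bf (y i) (y j) ≠ 0 →
      CS e inv q bf w (a • y i + c • y j) = CS e inv q bf w yy →
      rlt (a * bf w (y i)) (c * bf w (y j)) → False := by
    intro i j a c ha hc hg hCS hab
    have hinvBi := (hinv (bf w (y i)) (Bne i)).2
    set a' : R := c * bf w (y j) * inv (bf w (y i)) with ha'def
    have ga' : e * a' = a' := by
      rw [ha'def]
      calc e * (c * bf w (y j) * inv (bf w (y i)))
          = c * (e * bf w (y j)) * inv (bf w (y i)) := by ring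
        _ = c * bf w (y j) * inv (bf w (y i)) := by rw [gB j]
    have ha'Bi : a' * bf w (y i) = c * bf w (y j) := by
      have g1 : e * (a' * bf w (y i)) = a' * bf w (y i) := gmul a' _ (gB i)
      calc a' * bf w (y i) = e * (a' * bf w (y i)) := g1.symm
        _ = (c * bf w (y j)) * (e * bf w (y i) * inv (bf w (y i))) := by rw [ha'def]; ring
        _ = (c * bf w (y j)) * e := by rw [hinvBi]
        _ = e * (c * bf w (y j)) := by ring
        _ = c * bf w (y j) := gmul c _ (gB j)
    have hcBj : c * bf w (y j) ≠ 0 := mulne hc (Bne j)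
    have ha' : a' ≠ 0 := fun h => hcBj (by rw [← ha'Bi, h, zero_mul])
    have hstr : rlt (a * bf w (y i)) (a' * bf w (y i)) := by rw [ha'Bi]; exact hab
    have gaBi : e * (a * bf w (y i)) = a * bf w (y i) := gmul a _ (gB i)
    have ga'Bi : e * (a' * bf w (y i)) = a' * bf w (y i) := gmul a' _ (gB i)
    have ha'Bine : a' * bf w (y i) ≠ 0 := by rw [ha'Bi]; exact hcBj
    have hqz1 := hq2 i j a c
    have hqz2 := hq2 i j a' c
    -- termwise inequalities
    have hsq : rle ((a * bf w (y i)) * (a * bf w (y i)))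
        ((a' * bf w (y i)) * (a' * bf w (y i))) :=
      st_rle_trans (st_rle_mul _ hstr.1) (st_rle_mul_left _ hstr.1)
    have ht1 : rle (a ^ 2 * q (y i)) (a' ^ 2 * q (y i)) := by
      apply st_rle_cancel hst hbip hinv (gmul _ _ (gq i)) (gmul _ _ (gq i))
        (mulne (Bne i) (Bne i))
      have h4 := st_rle_mul (q (y i)) hsq
      have e1 : (a * bf w (y i)) * (a * bf w (y i)) * q (y i)
          = (a ^ 2 * q (y i)) * (bf w (y i) * bf w (y i)) := by ring
      have e2 : (a' * bf w (y i)) * (a' * bf w (y i)) * q (y i)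
          = (a' ^ 2 * q (y i)) * (bf w (y i) * bf w (y i)) := by ring
      rwa [e1, e2] at h4
    have ht3 : rle (a * (c * bf (y i) (y j))) (a' * (c * bf (y i) (y j))) := by
      apply st_rle_cancel hst hbip hinv (gmul _ _ (gmul _ _ (gbfy i j)))
        (gmul _ _ (gmul _ _ (gbfy i j))) (Bne i)
      have h4 := st_rle_mul (c * bf (y i) (y j)) hstr.1
      have e1 : (a * bf w (y i)) * (c * bf (y i) (y j))
          = (a * (c * bf (y i) (y j))) * bf w (y i) := by ring
      have e2 : (a' * bf w (y i)) * (c * bf (y i) (y j))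
          = (a' * (c * bf (y i) (y j))) * bf w (y i) := by ring
      rwa [e1, e2] at h4
    have hqle : rle (q (a • y i + c • y j)) (q (a' • y i + c • y j)) := by
      rw [hqz1, hqz2]
      exact st_rle_add (st_rle_add ht1 (st_grefl hst (gmul _ _ (gq j)))) ht3
    -- nonvanishing
    have hq2ne : q (a' • y i + c • y j) ≠ 0 := by
      intro h0
      have h5 : rle (a' ^ 2 * q (y i)) (q (a' • y i + c • y j)) := by
        rw [hqz2, add_assoc]
        exact st_rle_left hst _ (gmul _ _ (gq i))
      rw [h0] at h5
      rcases hzd _ _ (st_rle_zero h5) with h7 | h7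
      · rw [pow_two] at h7
        rcases hzd _ _ h7 with h8 | h8 <;> exact ha' h8
      · exact qne i h7
    have hq1ne : q (a • y i + c • y j) ≠ 0 := by
      intro h0
      have h5 : rle (a ^ 2 * q (y i)) (q (a • y i + c • y j)) := by
        rw [hqz1, add_assoc]
        exact st_rle_left hst _ (gmul _ _ (gq i))
      rw [h0] at h5
      rcases hzd _ _ (st_rle_zero h5) with h7 | h7
      · rw [pow_two] at h7
        rcases hzd _ _ h7 with h8 | h8 <;> exact ha h8
      · exact qne i h7
    have hz2ne : a' • y i + c • y j ≠ 0 := fun h => hq2ne (by rw [h, hq0])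
    have hminz2 := hmin _ hz2ne (hullMem i j a' c hz2ne)
    have hbz1 : bf w (a • y i + c • y j) = c * bf w (y j) := by
      rw [hbf2 i j a c]; exact hab.1
    have hbz2' : bf w (a' • y i + c • y j) = c * bf w (y j) := by
      rw [hbf2 i j a' c, ha'Bi]
      exact st_gadd hst (gmul c _ (gB j))
    by_cases hqq : q (a • y i + c • y j) = q (a' • y i + c • y j)
    · -- the j-th pure term dominates q(z'): contradiction with hlt j
      have hsq2 : rlt ((a * bf w (y i)) * (a * bf w (y i)))
          ((a' * bf w (y i)) * (a' * bf w (y i))) :=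
        st_rle_rlt_trans (st_rle_mul_left _ hstr.1)
          (st_rlt_mul hinv gaBi ga'Bi ha'Bine hstr)
      have hstr1 : rlt (a ^ 2 * q (y i)) (a' ^ 2 * q (y i)) := by
        apply st_rlt_cancel hst hbip hinv (gmul _ _ (gq i)) (gmul _ _ (gq i))
          (mulne (Bne i) (Bne i))
        have h4 := st_rlt_mul hinv (gmul _ _ gaBi) (gmul _ _ ga'Bi) (qne i) hsq2
        have e1 : (a * bf w (y i)) * (a * bf w (y i)) * q (y i)
            = (a ^ 2 * q (y i)) * (bf w (y i) * bf w (y i)) := by ring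
        have e2 : (a' * bf w (y i)) * (a' * bf w (y i)) * q (y i)
            = (a' ^ 2 * q (y i)) * (bf w (y i) * bf w (y i)) := by ring
        rwa [e1, e2] at h4
      have hstr3 : rlt (a * (c * bf (y i) (y j))) (a' * (c * bf (y i) (y j))) := by
        apply st_rlt_cancel hst hbip hinv (gmul _ _ (gmul _ _ (gbfy i j)))
          (gmul _ _ (gmul _ _ (gbfy i j))) (Bne i)
        have h4 := st_rlt_mul hinv gaBi ga'Bi (mulne hc hg) hstr
        have e1 : (a * bf w (y i)) * (c * bf (y i) (y j))
            = (a * (c * bf (y i) (y j))) * bf w (y i) := by ring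
        have e2 : (a' * bf w (y i)) * (c * bf (y i) (y j))
            = (a' * (c * bf (y i) (y j))) * bf w (y i) := by ring
        rwa [e1, e2] at h4
      have hle1 : rle (a' ^ 2 * q (y i)) (q (a • y i + c • y j)) := by
        rw [hqq, hqz2, add_assoc]
        exact st_rle_left hst _ (gmul _ _ (gq i))
      have hle3 : rle (a' * (c * bf (y i) (y j))) (q (a • y i + c • y j)) := by
        rw [hqq, hqz2]
        exact st_rle_right hst _ (gmul _ _ (gmul _ _ (gbfy i j)))
      have hr1 : rlt (a ^ 2 * q (y i)) (q (a • y i + c • y j)) :=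
        st_rlt_rle_trans hstr1 hle1
      have hr3 : rlt (a * (c * bf (y i) (y j))) (q (a • y i + c • y j)) :=
        st_rlt_rle_trans hstr3 hle3
      have hqzval : q (a • y i + c • y j) = c ^ 2 * q (y j) := by
        have h7 : q (a • y i + c • y j)
            = a ^ 2 * q (y i) + (c ^ 2 * q (y j) + a * (c * bf (y i) (y j))) := by
          rw [hqz1, add_assoc]
        rcases st_gbip hbip (gmul _ _ (gq i))
            (gaddg _ _ (gmul _ _ (gq j)) (gmul _ _ (gmul _ _ (gbfy i j)))) with h8 | h8
        · exact absurd (h7.trans h8).symm hr1.2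
        · have h9 := h7.trans h8
          rcases st_gbip hbip (gmul _ _ (gq j)) (gmul _ _ (gmul _ _ (gbfy i j))) with h10 | h10
          · exact h9.trans h10
          · exact absurd (h9.trans h10).symm hr3.2
      have hfin : CS e inv q bf w (a • y i + c • y j) = CS e inv q bf w (y j) := by
        show e * (bf w (a • y i + c • y j) * bf w (a • y i + c • y j))
            * inv (q w * q (a • y i + c • y j))
          = e * (bf w (y j) * bf w (y j)) * inv (q w * q (y j))
        rw [hbz1, hqzval]
        apply st_cseq hee hzd hinv
          (mulne aone (mulne (by rw [pow_two]; exact mulne hc hc) (qne j)))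
          (mulne aone (qne j))
        ring
      rw [hCS] at hfin
      exact (hlt j).2 hfin
    · -- strictly larger denominator: contradiction with minimality
      have hqlt : rlt (q (a • y i + c • y j)) (q (a' • y i + c • y j)) := ⟨hqle, hqq⟩
      have hdne : e * ((c * bf w (y j)) * (c * bf w (y j))) * q w ≠ 0 :=
        mulne (mulne he0 (mulne hcBj hcBj)) aone
      have h4 := st_rlt_mul hinv (gqv _ (gv i j a c)) (gqv _ (gv i j a' c)) hdne hqlt
      have e1 : q (a • y i + c • y j) * (e * ((c * bf w (y j)) * (c * bf w (y j))) * q w)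
          = e * ((c * bf w (y j)) * (c * bf w (y j))) * (q w * q (a • y i + c • y j)) := by
        ring
      have e2 : q (a' • y i + c • y j) * (e * ((c * bf w (y j)) * (c * bf w (y j))) * q w)
          = e * ((c * bf w (y j)) * (c * bf w (y j))) * (q w * q (a' • y i + c • y j)) := by
        ring
      rw [e1, e2] at h4
      have h5 := st_cslt_inv hee hst hzd hbip hinv (mulne aone hq2ne) (mulne aone hq1ne) h4
      have h6 : rle (CS e inv q bf w (a • y i + c • y j))
          (CS e inv q bf w (a' • y i + c • y j)) := by
        rw [← hCS] at hminz2
        exact hminz2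
      have h7 : rlt (CS e inv q bf w (a' • y i + c • y j))
          (CS e inv q bf w (a • y i + c • y j)) := by
        show rlt (e * (bf w (a' • y i + c • y j) * bf w (a' • y i + c • y j))
            * inv (q w * q (a' • y i + c • y j)))
          (e * (bf w (a • y i + c • y j) * bf w (a • y i + c • y j))
            * inv (q w * q (a • y i + c • y j)))
        rw [hbz1, hbz2']
        exact h5
      exact (st_rle_rlt_trans h6 h7).2 rfl
  have balance : ∀ (i j : Fin n) (a c : R), a ≠ 0 → c ≠ 0 → bf (y i) (y j) ≠ 0 →
      CS e inv q bf w (a • y i + c • y j) = CS e inv q bf w yy →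
      a * bf w (y i) = c * bf w (y j) := by
    intro i j a c ha hc hg hCS
    by_cases hne : a * bf w (y i) = c * bf w (y j)
    · exact hne
    rcases st_gtotal hbip (gmul a _ (gB i)) (gmul c _ (gB j)) with h | h
    · exact (core i j a c ha hc hg hCS ⟨h, hne⟩).elim
    · refine (core j i c a hc ha ?_ ?_ ⟨h, fun hh => hne hh.symm⟩).elim
      · rw [hbsymm]; exact hg
      · rw [add_comm]; exact hCS
  have hbal : lam r * bf w (y r) = lam s * bf w (y s) :=
    balance r s (lam r) (lam s) hlamr hlams hgne hCSz
  have rayMed : ∀ a c : R, a ≠ 0 → c ≠ 0 → a * bf w (y r) = c * bf w (y s) →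
      ray R (a • y r + c • y s) = ray R (med bf w (y r) (y s)) := by
    intro a c ha hc hbal'
    apply st_rayeq hzd _ _ (bf w (y r) * bf w (y s)) (a * bf w (y r))
      (mulne (Bne r) (Bne s)) (mulne ha (Bne r))
    show (bf w (y r) * bf w (y s)) • (a • y r + c • y s)
        = (a * bf w (y r)) • (bf w (y s) • y r + bf w (y r) • y s)
    rw [smul_add, smul_add, smul_smul, smul_smul, smul_smul, smul_smul]
    congr 1
    · congr 1
      ring
    · congr 1
      calc bf w (y r) * bf w (y s) * c = (c * bf w (y s)) * bf w (y r) := by ring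
        _ = (a * bf w (y r)) * bf w (y r) := by rw [← hbal']
        _ = a * bf w (y r) * bf w (y r) := by ring
  refine ⟨hrlt, ⟨lam r, lam s, zne, rfl⟩, rayMed (lam r) (lam s) hlamr hlams hbal, hCSz, ?_, ?_⟩
  · -- CS(w,z)^2 CS(yr,ys) = CS(w,yr) CS(w,ys)
    have hbz : bf w (lam r • y r + lam s • y s) = lam r * bf w (y r) := by
      rw [hbf2 r s (lam r) (lam s), ← hbal]
      exact st_gadd hst (gmul _ _ (gB r))
    have hbal2 : (lam r * bf w (y r)) * (lam r * bf w (y r))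
        = (lam r * bf w (y r)) * (lam s * bf w (y s)) :=
      congrArg (fun t => (lam r * bf w (y r)) * t) hbal
    have hQ1 : q w * (bf (y r) (y s) * lam r * lam s) ≠ 0 := mulne aone hprodne
    have hQ3 : q (y r) * q (y s) ≠ 0 := mulne (qne r) (qne s)
    have hQr : q w * q (y r) ≠ 0 := mulne aone (qne r)
    have hQs : q w * q (y s) ≠ 0 := mulne aone (qne s)
    show CS e inv q bf w (lam r • y r + lam s • y s)
        * CS e inv q bf w (lam r • y r + lam s • y s) * CS e inv q bf (y r) (y s)
      = CS e inv q bf w (y r) * CS e inv q bf w (y s)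
    simp only [CS]
    rw [hbz, qz]
    apply st_gcancel hinv (gmul _ _ (st_cs_ghost hee _ _)) (gmul _ _ (st_cs_ghost hee _ _))
      (st_mulne hzd hQ1 (st_mulne hzd hQ1 (st_mulne hzd hQ3 (st_mulne hzd hQr hQs))))
    calc (e * (lam r * bf w (y r) * (lam r * bf w (y r)))
            * inv (q w * (bf (y r) (y s) * lam r * lam s))
          * (e * (lam r * bf w (y r) * (lam r * bf w (y r)))
            * inv (q w * (bf (y r) (y s) * lam r * lam s)))
          * (e * (bf (y r) (y s) * bf (y r) (y s)) * inv (q (y r) * q (y s))))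
        * (q w * (bf (y r) (y s) * lam r * lam s)
          * (q w * (bf (y r) (y s) * lam r * lam s)
            * (q (y r) * q (y s) * (q w * q (y r) * (q w * q (y s))))))
        = (e * (lam r * bf w (y r) * (lam r * bf w (y r)))
              * inv (q w * (bf (y r) (y s) * lam r * lam s))
            * (q w * (bf (y r) (y s) * lam r * lam s)))
          * ((e * (lam r * bf w (y r) * (lam r * bf w (y r)))
              * inv (q w * (bf (y r) (y s) * lam r * lam s))
            * (q w * (bf (y r) (y s) * lam r * lam s)))
          * ((e * (bf (y r) (y s) * bf (y r) (y s)) * inv (q (y r) * q (y s))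
            * (q (y r) * q (y s)))
          * (q w * q (y r) * (q w * q (y s))))) := by ring
      _ = (e * (lam r * bf w (y r) * (lam r * bf w (y r))))
          * ((e * (lam r * bf w (y r) * (lam r * bf w (y r))))
          * ((e * (bf (y r) (y s) * bf (y r) (y s)))
          * (q w * q (y r) * (q w * q (y s))))) := by
        rw [st_csclear hinv (lam r * bf w (y r) * (lam r * bf w (y r)))
            (q w * (bf (y r) (y s) * lam r * lam s)) hQ1,
          st_csclear hinv (bf (y r) (y s) * bf (y r) (y s)) (q (y r) * q (y s)) hQ3]
      _ = e * (e * (e * ((lam r * bf w (y r) * (lam r * bf w (y r)))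
          * ((lam r * bf w (y r) * (lam r * bf w (y r)))
          * ((bf (y r) (y s) * bf (y r) (y s))
          * (q w * q (y r) * (q w * q (y s)))))))) := by ring
      _ = e * ((lam r * bf w (y r) * (lam r * bf w (y r)))
          * ((lam r * bf w (y r) * (lam r * bf w (y r)))
          * ((bf (y r) (y s) * bf (y r) (y s))
          * (q w * q (y r) * (q w * q (y s)))))) := by
        rw [st_ghostE hee, st_ghostE hee]
      _ = e * ((lam r * bf w (y r) * (lam s * bf w (y s)))
          * ((lam r * bf w (y r) * (lam s * bf w (y s)))
          * ((bf (y r) (y s) * bf (y r) (y s))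
          * (q w * q (y r) * (q w * q (y s)))))) := by
        rw [hbal2]
      _ = e * (e * ((lam r * bf w (y r) * (lam s * bf w (y s)))
          * ((lam r * bf w (y r) * (lam s * bf w (y s)))
          * ((bf (y r) (y s) * bf (y r) (y s))
          * (q w * q (y r) * (q w * q (y s))))))) := (st_ghostE hee _).symm
      _ = (e * (bf w (y r) * bf w (y r)))
          * ((e * (bf w (y s) * bf w (y s)))
          * (q w * (bf (y r) (y s) * lam r * lam s)
            * (q w * (bf (y r) (y s) * lam r * lam s) * (q (y r) * q (y s))))) := by ring
      _ = (e * (bf w (y r) * bf w (y r)) * inv (q w * q (y r)) * (q w * q (y r)))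
          * ((e * (bf w (y s) * bf w (y s)) * inv (q w * q (y s)) * (q w * q (y s)))
          * (q w * (bf (y r) (y s) * lam r * lam s)
            * (q w * (bf (y r) (y s) * lam r * lam s) * (q (y r) * q (y s))))) := by
        rw [st_csclear hinv (bf w (y r) * bf w (y r)) (q w * q (y r)) hQr,
          st_csclear hinv (bf w (y s) * bf w (y s)) (q w * q (y s)) hQs]
      _ = (e * (bf w (y r) * bf w (y r)) * inv (q w * q (y r))
          * (e * (bf w (y s) * bf w (y s)) * inv (q w * q (y s))))
          * (q w * (bf (y r) (y s) * lam r * lam s)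
            * (q w * (bf (y r) (y s) * lam r * lam s)
              * (q (y r) * q (y s) * (q w * q (y r) * (q w * q (y s)))))) := by ring
  · -- uniqueness
    intro a c hne hCSeq
    have ha : a ≠ 0 := by
      intro h0
      rw [h0, zero_smul, zero_add] at hne hCSeq
      have hc : c ≠ 0 := fun h => hne (by rw [h, zero_smul])
      have hcs : CS e inv q bf w (c • y s) = CS e inv q bf w (y s) := by
        show e * (bf w (c • y s) * bf w (c • y s)) * inv (q w * q (c • y s))
          = e * (bf w (y s) * bf w (y s)) * inv (q w * q (y s))
        have hb : bf w (c • y s) = c * bf w (y s) := by rw [hbsymm, hbs, hbsymm]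
        rw [hb, hq c (y s)]
        apply st_cseq hee hzd hinv
          (mulne aone (mulne (by rw [pow_two]; exact mulne hc hc) (qne s)))
          (mulne aone (qne s))
        ring
      exact (hlt s).2 (hCSeq.symm.trans hcs)
    have hc : c ≠ 0 := by
      intro h0
      rw [h0, zero_smul, add_zero] at hne hCSeq
      have hcs : CS e inv q bf w (a • y r) = CS e inv q bf w (y r) := by
        show e * (bf w (a • y r) * bf w (a • y r)) * inv (q w * q (a • y r))
          = e * (bf w (y r) * bf w (y r)) * inv (q w * q (y r))
        have hb : bf w (a • y r) = a * bf w (y r) := by rw [hbsymm, hbs, hbsymm]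
        rw [hb, hq a (y r)]
        apply st_cseq hee hzd hinv
          (mulne aone (mulne (by rw [pow_two]; exact mulne ha ha) (qne r)))
          (mulne aone (qne r))
        ring
      exact (hlt r).2 (hCSeq.symm.trans hcs)
    have hbal' := balance r s a c ha hc hgne hCSeq
    exact (rayMed a c ha hc hbal').trans (rayMed (lam r) (lam s) hlamr hlams hbal).symm

end SupertropicalCS
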